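/- arXiv:1707.08393 — 2 statements merged into one kernel-verified Lean document; each statement's English description precedes it below -/
import Mathlib

section
/- (Gauss–Kuzmin equation.) Let F_n(x) = λ({x' ∈ I : T_N^n(x') < x}). Then for every n ≥ 0 and every x ∈ I, F_{n+1}(x) = Σ_{i ≥ N} ( F_n(N/i) − F_n(N/(x+i)) ), the sum being over all integers i ≥ N. -/
open MeasureTheory Set Filter
open scoped Classical Topology ENNReal

/-- The N-continued fraction transformation `T_N x = N/x - ⌊N/x⌋` (with `T_N 0 = 0`). -/
noncomputable def TN (N : ℕ) (x : ℝ) : ℝ := (N : ℝ) / x - ⌊(N : ℝ) / x⌋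

/-- The one-dimensional distribution functions `F_n(x) = λ({x' ∈ I : T_N^n(x') < x})`. -/
noncomputable def Fone (N n : ℕ) (x : ℝ) : ℝ :=
  (volume {x' ∈ Icc (0:ℝ) 1 | (TN N)^[n] x' < x}).toReal

lemma TN_eq_fract (N : ℕ) (x : ℝ) : TN N x = Int.fract ((N:ℝ)/x) := rfl

lemma TN_nonneg (N : ℕ) (x : ℝ) : 0 ≤ TN N x := by
  rw [TN_eq_fract]; exact Int.fract_nonneg _

lemma TN_measurable (N : ℕ) : Measurable (TN N) := by
  have : TN N = Int.fract ∘ (fun x : ℝ => (N:ℝ)/x) := by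
    funext x; rw [TN_eq_fract]; rfl
  rw [this]
  exact measurable_fract.comp (measurable_const.div measurable_id)

lemma TN_preimage_countable (N : ℕ) (hN : 1 ≤ N) (c : ℝ) :
    ((TN N) ⁻¹' {c}).Countable := by
  have hsub : (TN N) ⁻¹' {c} ⊆ {0} ∪ Set.range (fun m : ℤ => (N:ℝ)/(c+m)) := by
    intro y hy
    simp only [Set.mem_preimage, Set.mem_singleton_iff] at hy
    rcases eq_or_ne y 0 with h0 | h0
    · exact Or.inl h0
    · right
      refine ⟨⌊(N:ℝ)/y⌋, ?_⟩
      have hNy : (N:ℝ)/y = c + ⌊(N:ℝ)/y⌋ := by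
        have := hy; unfold TN at this; linarith
      have hN0 : (N:ℝ) ≠ 0 := by positivity
      have hne : c + (⌊(N:ℝ)/y⌋ : ℝ) ≠ 0 := by
        rw [← hNy]; exact div_ne_zero hN0 h0
      field_simp
      rw [eq_comm, eq_div_iff h0] at hNy
      linarith [hNy]
  exact ((Set.countable_singleton _).union (Set.countable_range _)).mono hsub

lemma TN_iter_preimage_countable (N : ℕ) (hN : 1 ≤ N) (n : ℕ) (c : ℝ) :
    ((TN N)^[n] ⁻¹' {c}).Countable := by
  induction n generalizing c with
  | zero => simpa using Set.countable_singleton c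
  | succ n ih =>
    have : (TN N)^[n+1] ⁻¹' {c} = (TN N) ⁻¹' ((TN N)^[n] ⁻¹' {c}) := by
      rw [Function.iterate_succ]; rfl
    rw [this]
    have : (TN N) ⁻¹' ((TN N)^[n] ⁻¹' {c}) = ⋃ z ∈ (TN N)^[n] ⁻¹' {c}, (TN N) ⁻¹' {z} := by
      ext y; simp
    rw [this]
    exact (ih c).biUnion (fun z _ => TN_preimage_countable N hN z)

/-- forward direction of branch characterization -/
lemma TN_lt_iff_forward (N : ℕ) (hN : 1 ≤ N) {x y : ℝ} (hy0 : 0 < y) (hy1 : y ≤ 1)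
    (h : TN N y < x) :
    ∃ k : ℕ, y ∈ Ioc ((N:ℝ)/(x + ((N + k : ℕ):ℝ))) ((N:ℝ)/((N + k : ℕ):ℝ)) := by
  set m : ℤ := ⌊(N:ℝ)/y⌋ with hm
  have hNpos : (0:ℝ) < N := by exact_mod_cast Nat.lt_of_lt_of_le Nat.zero_lt_one hN
  have hNle : (N:ℝ) ≤ (N:ℝ)/y := by
    rw [le_div_iff₀ hy0]; nlinarith
  have hmN : (N:ℤ) ≤ m := by
    rw [hm, Int.le_floor]; exact_mod_cast hNle
  have hmpos : (0:ℝ) < (m:ℝ) := by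
    have : (1:ℤ) ≤ m := le_trans (by exact_mod_cast hN) hmN
    exact_mod_cast lt_of_lt_of_le Int.zero_lt_one this
  refine ⟨m.toNat - N, ?_⟩
  have hcast : ((N + (m.toNat - N) : ℕ) : ℝ) = (m:ℝ) := by
    have h1 : N + (m.toNat - N) = m.toNat := by
      have : N ≤ m.toNat := by omega
      omega
    rw [h1]
    exact_mod_cast Int.toNat_of_nonneg (le_trans (by positivity) hmN)
  rw [hcast]
  constructor
  · -- N/(x+m) < y
    have hfloor : (m:ℝ) ≤ (N:ℝ)/y := Int.floor_le _
    have hlt : (N:ℝ)/y < x + m := by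
      unfold TN at h; rw [← hm] at h; linarith
    have hxm : (0:ℝ) < x + m := by
      have : 0 ≤ TN N y := TN_nonneg N y
      nlinarith
    rw [div_lt_iff₀ hxm]
    rw [div_lt_iff₀ hy0] at hlt
    nlinarith
  · -- y ≤ N/m
    have hfloor : (m:ℝ) ≤ (N:ℝ)/y := Int.floor_le _
    rw [le_div_iff₀ hmpos]
    rw [le_div_iff₀ hy0] at hfloor
    nlinarith

lemma TN_lt_iff_backward (N : ℕ) (hN : 1 ≤ N) {x y : ℝ} (hx0 : 0 ≤ x) (hx1 : x ≤ 1) (k : ℕ)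
    (h : y ∈ Ioc ((N:ℝ)/(x + ((N + k : ℕ):ℝ))) ((N:ℝ)/((N + k : ℕ):ℝ))) :
    TN N y < x := by
  obtain ⟨h1, h2⟩ := h
  have hNpos : (0:ℝ) < N := by exact_mod_cast Nat.lt_of_lt_of_le Nat.zero_lt_one hN
  have hipos : (0:ℝ) < ((N + k : ℕ):ℝ) := by positivity
  have hxi : (0:ℝ) < x + ((N + k : ℕ):ℝ) := by linarith
  have hy0 : 0 < y := lt_trans (by positivity) h1
  have hub : (N:ℝ)/y < x + ((N + k : ℕ):ℝ) := by
    rw [div_lt_iff₀ hy0]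
    rw [div_lt_iff₀ hxi] at h1
    nlinarith
  have hlb : ((N + k : ℕ):ℝ) ≤ (N:ℝ)/y := by
    rw [le_div_iff₀ hy0]
    rw [le_div_iff₀ hipos] at h2
    nlinarith
  have hfloor : ⌊(N:ℝ)/y⌋ = ((N + k : ℕ) : ℤ) := by
    rw [Int.floor_eq_iff]
    refine ⟨by exact_mod_cast hlb, ?_⟩
    have : ((((N + k : ℕ) : ℤ)):ℝ) = ((N + k : ℕ):ℝ) := by push_cast; ring
    rw [this]
    linarith
  unfold TN
  rw [hfloor]
  have : ((((N + k : ℕ) : ℤ)):ℝ) = ((N + k : ℕ):ℝ) := by push_cast; ring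
  rw [this]
  linarith

lemma TN_lt_one (N : ℕ) (x : ℝ) : TN N x < 1 := by
  rw [TN_eq_fract]; exact Int.fract_lt_one _

lemma TN_iter_mem (N n : ℕ) {x' : ℝ} (h : x' ∈ Icc (0:ℝ) 1) :
    (TN N)^[n] x' ∈ Icc (0:ℝ) 1 := by
  induction n with
  | zero => simpa using h
  | succ n ih =>
    rw [Function.iterate_succ_apply']
    exact ⟨TN_nonneg _ _, le_of_lt (TN_lt_one _ _)⟩

/-- The distribution set. -/
def GKD (N n : ℕ) (c : ℝ) : Set ℝ := {x' ∈ Icc (0:ℝ) 1 | (TN N)^[n] x' < c}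

/-- The branch sets. -/
noncomputable def GKC (N n : ℕ) (x : ℝ) (k : ℕ) : Set ℝ :=
  {x' ∈ Icc (0:ℝ) 1 |
    (TN N)^[n] x' ∈ Ioc ((N:ℝ)/(x + ((N + k : ℕ):ℝ))) ((N:ℝ)/((N + k : ℕ):ℝ))}

lemma GKD_meas (N n : ℕ) (c : ℝ) : MeasurableSet (GKD N n c) := by
  have : GKD N n c = Icc (0:ℝ) 1 ∩ (TN N)^[n] ⁻¹' (Iio c) := rfl
  rw [this]
  exact measurableSet_Icc.inter (((TN_measurable N).iterate n) measurableSet_Iio)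

lemma GKC_meas (N n : ℕ) (x : ℝ) (k : ℕ) : MeasurableSet (GKC N n x k) := by
  have : GKC N n x k = Icc (0:ℝ) 1 ∩
      (TN N)^[n] ⁻¹' (Ioc ((N:ℝ)/(x + ((N + k : ℕ):ℝ))) ((N:ℝ)/((N + k : ℕ):ℝ))) := rfl
  rw [this]
  exact measurableSet_Icc.inter (((TN_measurable N).iterate n) measurableSet_Ioc)

lemma vol_Icc_ne_top : volume (Icc (0:ℝ) 1) ≠ ⊤ := by
  rw [Real.volume_Icc]; exact ENNReal.ofReal_ne_top

lemma GKD_ne_top (N n : ℕ) (c : ℝ) : volume (GKD N n c) ≠ ⊤ :=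
  ne_top_of_le_ne_top vol_Icc_ne_top (measure_mono (Set.sep_subset _ _))

lemma GKC_ne_top (N n : ℕ) (x : ℝ) (k : ℕ) : volume (GKC N n x k) ≠ ⊤ :=
  ne_top_of_le_ne_top vol_Icc_ne_top (measure_mono (Set.sep_subset _ _))

lemma Fone_eq (N n : ℕ) (c : ℝ) : Fone N n c = (volume (GKD N n c)).toReal := rfl

lemma iter_point_null (N : ℕ) (hN : 1 ≤ N) (n : ℕ) (c : ℝ) :
    volume ((TN N)^[n] ⁻¹' {c}) = 0 :=
  (TN_iter_preimage_countable N hN n c).measure_zero volume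

lemma meas_eq_aux {A B Z1 Z2 : Set ℝ} (h1 : A ⊆ B ∪ Z1) (h2 : B ⊆ A ∪ Z2)
    (hZ1 : volume Z1 = 0) (hZ2 : volume Z2 = 0) : volume A = volume B := by
  apply le_antisymm
  · calc volume A ≤ volume (B ∪ Z1) := measure_mono h1
      _ ≤ volume B + volume Z1 := measure_union_le _ _
      _ = volume B := by rw [hZ1, add_zero]
  · calc volume B ≤ volume (A ∪ Z2) := measure_mono h2
      _ ≤ volume A + volume Z2 := measure_union_le _ _
      _ = volume A := by rw [hZ2, add_zero]

lemma GKD_subset (N n : ℕ) {c d : ℝ} (h : c ≤ d) : GKD N n c ⊆ GKD N n d :=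
  fun x' ⟨hS, hlt⟩ => ⟨hS, lt_of_lt_of_le hlt h⟩

lemma ab_le (N : ℕ) {x : ℝ} (hx0 : 0 ≤ x) (k : ℕ) :
    (N:ℝ)/(x + ((N + k : ℕ):ℝ)) ≤ (N:ℝ)/((N + k : ℕ):ℝ) := by
  rcases Nat.eq_zero_or_pos N with h | h
  · simp [h]
  · have hNpos : (0:ℝ) < N := by exact_mod_cast h
    have hipos : (0:ℝ) < ((N + k : ℕ):ℝ) := by positivity
    gcongr
    linarith

lemma GKC_vol (N : ℕ) (hN : 1 ≤ N) (n : ℕ) {x : ℝ} (hx0 : 0 ≤ x) (k : ℕ) :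
    volume (GKC N n x k) =
      volume (GKD N n ((N:ℝ)/((N + k : ℕ):ℝ)))
        - volume (GKD N n ((N:ℝ)/(x + ((N + k : ℕ):ℝ)))) := by
  set a := (N:ℝ)/(x + ((N + k : ℕ):ℝ)) with ha
  set b := (N:ℝ)/((N + k : ℕ):ℝ) with hb
  have hab : a ≤ b := ab_le N hx0 k
  have hstep : volume (GKC N n x k) = volume (GKD N n b \ GKD N n a) := by
    apply meas_eq_aux (Z1 := (TN N)^[n] ⁻¹' {b}) (Z2 := (TN N)^[n] ⁻¹' {a})
    · rintro x' ⟨hS, hmem⟩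
      obtain ⟨hlo, hhi⟩ := hmem
      rcases lt_or_eq_of_le hhi with hlt | heq
      · exact Or.inl ⟨⟨hS, hlt⟩, fun hmem' => absurd hmem'.2 (not_lt.mpr (le_of_lt hlo))⟩
      · exact Or.inr heq
    · rintro x' ⟨⟨hS, hlt⟩, hnot⟩
      have hge : a ≤ (TN N)^[n] x' := by
        by_contra hcon
        exact hnot ⟨hS, not_le.mp hcon⟩
      rcases lt_or_eq_of_le hge with hlt2 | heq
      · exact Or.inl ⟨hS, hlt2, le_of_lt hlt⟩
      · exact Or.inr heq.symm
    · exact iter_point_null N hN n b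
    · exact iter_point_null N hN n a
  rw [hstep]
  exact measure_diff (GKD_subset N n hab) (GKD_meas N n a).nullMeasurableSet (GKD_ne_top N n a)

lemma GKC_disjoint (N : ℕ) (hN : 1 ≤ N) (n : ℕ) {x : ℝ} (hx0 : 0 ≤ x) (hx1 : x ≤ 1) :
    Pairwise (Function.onFun Disjoint (GKC N n x)) := by
  have key : ∀ j k : ℕ, j < k → Disjoint (GKC N n x j) (GKC N n x k) := by
    intro j k hjk
    rw [Set.disjoint_left]
    rintro x' ⟨hS, hj1, hj2⟩ ⟨_, hk1, hk2⟩
    have hNpos : (0:ℝ) < N := by exact_mod_cast Nat.lt_of_lt_of_le Nat.zero_lt_one hN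
    have hpos : (0:ℝ) < x + ((N + j : ℕ):ℝ) := by positivity
    have hc : x + ((N + j : ℕ):ℝ) ≤ ((N + k : ℕ):ℝ) := by
      push_cast
      have : (j:ℝ) + 1 ≤ (k:ℝ) := by exact_mod_cast hjk
      linarith
    have hchain : (N:ℝ)/((N + k : ℕ):ℝ) ≤ (N:ℝ)/(x + ((N + j : ℕ):ℝ)) := by
      exact div_le_div_of_nonneg_left (le_of_lt hNpos) hpos hc
    linarith
  intro j k hjk
  rcases hjk.lt_or_gt with h | h
  · exact key j k h
  · exact (key k j h).symm

/-- The Gauss–Kuzmin equation: for every `n ≥ 0` and `x ∈ I`,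
`F_{n+1}(x) = Σ_{i ≥ N} (F_n(N/i) − F_n(N/(x+i)))`, the sum over integers `i ≥ N`
being indexed by `i = N + k`, `k : ℕ`. -/
theorem gauss_kuzmin_equation (N : ℕ) (hN : 1 ≤ N) (n : ℕ) (x : ℝ) (hx : x ∈ Icc (0:ℝ) 1) :
    Fone N (n+1) x =
      ∑' k : ℕ, (Fone N n ((N : ℝ) / ((N + k : ℕ) : ℝ))
                  - Fone N n ((N : ℝ) / (x + ((N + k : ℕ) : ℝ)))) := by
  obtain ⟨hx0, hx1⟩ := hx
  rcases eq_or_lt_of_le hx0 with h0 | hxpos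
  · -- x = 0 case
    have hL : {x' ∈ Icc (0:ℝ) 1 | (TN N)^[n+1] x' < x} = ∅ := by
      ext x'
      simp only [Set.mem_setOf_eq, Set.mem_empty_iff_false, iff_false, not_and]
      intro _
      rw [Function.iterate_succ_apply', ← h0]
      exact not_lt.mpr (TN_nonneg N _)
    have hR : ∀ k : ℕ, Fone N n ((N : ℝ) / ((N + k : ℕ) : ℝ))
        - Fone N n ((N : ℝ) / (x + ((N + k : ℕ) : ℝ))) = 0 := by
      intro k
      rw [← h0, zero_add, sub_self]
    rw [tsum_congr hR, tsum_zero]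
    show (volume {x' ∈ Icc (0:ℝ) 1 | (TN N)^[n+1] x' < x}).toReal = 0
    rw [hL]
    simp
  · -- main case
    have hA : volume {x' ∈ Icc (0:ℝ) 1 | (TN N)^[n+1] x' < x}
        = volume (⋃ k, GKC N n x k) := by
      apply meas_eq_aux (Z1 := (TN N)^[n] ⁻¹' {0}) (Z2 := ∅)
      · rintro x' ⟨hS, hlt⟩
        rw [Function.iterate_succ_apply'] at hlt
        have hyI := TN_iter_mem N n hS
        rcases eq_or_lt_of_le hyI.1 with hy0 | hy0
        · exact Or.inr (by simp [← hy0])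
        · obtain ⟨k, hk⟩ := TN_lt_iff_forward N hN hy0 hyI.2 hlt
          exact Or.inl (Set.mem_iUnion.mpr ⟨k, hS, hk⟩)
      · rintro x' hx'
        left
        obtain ⟨k, hS, hk⟩ := Set.mem_iUnion.mp hx'
        refine ⟨hS, ?_⟩
        rw [Function.iterate_succ_apply']
        exact TN_lt_iff_backward N hN hx0 hx1 k hk
      · exact iter_point_null N hN n 0
      · exact measure_empty
    have hsum : volume (⋃ k, GKC N n x k) = ∑' k, volume (GKC N n x k) :=
      measure_iUnion (GKC_disjoint N hN n hx0 hx1) (GKC_meas N n x)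
    show (volume {x' ∈ Icc (0:ℝ) 1 | (TN N)^[n+1] x' < x}).toReal = _
    rw [hA, hsum, ENNReal.tsum_toReal_eq (fun k => GKC_ne_top N n x k)]
    apply tsum_congr
    intro k
    rw [GKC_vol N hN n hx0 k,
      ENNReal.toReal_sub_of_le
        (measure_mono (GKD_subset N n (ab_le N hx0 k))) (GKD_ne_top N n _)]
    rfl
end

section
/- For every function f : I → ℂ of bounded variation, var(Uf) ≤ (1/(N+1))·var(f), where var denotes the total variation over I = [0,1]. -/
/-!
Write `V_{N,N+k}(u) = g_k(u) - g_{k+1}(u)` with the tails `g_k(u) = (u+N)/(u+N+k)`, which increase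
in `u`, and the nodes `x_k(u) = N/(u+N+k)`, which decrease in `u` and satisfy
`x_{k+1}(s) ≤ x_k(t) ≤ x_k(s)` for `s ≤ t ≤ s + 1`. Summation by parts along this interlacing
bounds `‖Uf(t) - Uf(s)‖` by `Uv(s) - Uv(t)`, where `v(y) = var_{[0,y]} f`, so the variation of
`Uf` is at most `Uv(0) - Uv(1)`. Finally `Uh(0) = h(1)/(N+1) + N/(N+1) · Uh(1)` for every `h`,
and `Uv(1) ≥ 0` gives `Uv(0) - Uv(1) ≤ v(1)/(N+1)`.
-/

open MeasureTheory Set Filter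
open scoped Classical Topology ENNReal

/-- The transition (Perron–Frobenius) operator
`(Uf)(s) = Σ_{i ≥ N} V_{N,i}(s) f(N/(s+i))` with `V_{N,i}(s) = (s+N)/((s+i)(s+i+1))`,
the sum over integers `i ≥ N` being indexed by `i = N + k`, `k : ℕ`. -/
noncomputable def Uop (N : ℕ) (f : ℝ → ℂ) (s : ℝ) : ℂ :=
  ∑' k : ℕ, (((s + N) / ((s + ((N + k : ℕ) : ℝ)) * (s + ((N + k : ℕ) : ℝ) + 1)) : ℝ) : ℂ)
      * f ((N : ℝ) / (s + ((N + k : ℕ) : ℝ)))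

section Variation

variable {α : Type*} [LinearOrder α]

theorem eVariationOn_le_of_edist_le {E F : Type*} [PseudoEMetricSpace E] [PseudoEMetricSpace F]
    {f : α → E} {g : α → F} {s : Set α}
    (h : ∀ x ∈ s, ∀ y ∈ s, edist (f x) (f y) ≤ edist (g x) (g y)) :
    eVariationOn f s ≤ eVariationOn g s :=
  iSup_mono fun p => Finset.sum_le_sum fun _ _ => h _ (p.2.2.2 _) _ (p.2.2.2 _)

variable {E : Type*} [PseudoMetricSpace E] {f : α → E} {s : Set α} {a b c : α}

theorem eVariationOn_inter_Icc_le_of_dist_le_sub {Φ : α → ℝ}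
    (hΦ : ∀ x ∈ s, ∀ y ∈ s, x ≤ y → dist (f x) (f y) ≤ Φ y - Φ x) (ha : a ∈ s) (hb : b ∈ s) :
    eVariationOn f (s ∩ Icc a b) ≤ ENNReal.ofReal (Φ b - Φ a) := by
  have hmono : MonotoneOn Φ s := fun x hx y hy hxy =>
    sub_nonneg.1 (dist_nonneg.trans (hΦ x hx y hy hxy))
  rw [← hmono.eVariationOn_eq ha hb]
  refine eVariationOn_le_of_edist_le fun x hx y hy => ?_
  wlog hxy : x ≤ y generalizing x y
  · rw [edist_comm, edist_comm (Φ x)]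
    exact this y hy x hx (le_of_not_ge hxy)
  rw [edist_dist, edist_dist, Real.dist_eq, abs_sub_comm,
    abs_of_nonneg (sub_nonneg.2 (hmono hx.1 hy.1 hxy))]
  exact ENNReal.ofReal_le_ofReal (hΦ x hx.1 y hy.1 hxy)

theorem dist_le_variationOnFromTo_sub (hf : LocallyBoundedVariationOn f s)
    (ha : a ∈ s) (hb : b ∈ s) (hc : c ∈ s) (hbc : b ≤ c) :
    dist (f b) (f c) ≤ variationOnFromTo f s a c - variationOnFromTo f s a b := by
  rw [variationOnFromTo.sub_right hf ha hc hb, variationOnFromTo.eq_of_le f s hbc, dist_edist]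
  exact ENNReal.toReal_mono (hf b c hb hc)
    (eVariationOn.edist_le f ⟨hb, le_rfl, hbc⟩ ⟨hc, hbc, le_rfl⟩)

end Variation

section TailSum

open Finset

variable {E : Type*} [NormedAddCommGroup E] [NormedSpace ℝ E]

noncomputable def tailSum (G y : ℕ → ℝ) (φ : ℝ → E) : E :=
  ∑' k, (G k - G (k + 1)) • φ (y k)

variable {G H y z : ℕ → ℝ} {D : Set ℝ} {C : ℝ}

theorem hasSum_sub_succ_of_antitone (hG : Antitone G) (hlim : Tendsto G atTop (𝓝 0)) :
    HasSum (fun k => G k - G (k + 1)) (G 0) := by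
  refine (hasSum_iff_tendsto_nat_of_nonneg (fun k => sub_nonneg.2 (hG k.le_succ)) _).2 ?_
  simp_rw [sum_range_sub']
  simpa using tendsto_const_nhds.sub hlim

theorem summable_tailSum [CompleteSpace E] (hG : Antitone G) (hlim : Tendsto G atTop (𝓝 0))
    {φ : ℝ → E} (hφ : ∀ k, ‖φ (y k)‖ ≤ C) :
    Summable fun k => (G k - G (k + 1)) • φ (y k) :=
  ((hasSum_sub_succ_of_antitone hG hlim).summable.mul_right C).of_norm_bounded fun k => by
    rw [norm_smul, Real.norm_of_nonneg (sub_nonneg.2 (hG k.le_succ))]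
    exact mul_le_mul_of_nonneg_left (hφ k) (sub_nonneg.2 (hG k.le_succ))

theorem tailSum_nonneg (hG : Antitone G) {φ : ℝ → ℝ} (hφ : ∀ k, 0 ≤ φ (y k)) :
    0 ≤ tailSum G y φ :=
  tsum_nonneg fun k => smul_nonneg (sub_nonneg.2 (hG k.le_succ)) (hφ k)

/-- Summation by parts of `tailSum H z φ - tailSum G y φ` pairs each node `z k` with its
neighbours `y k` and `y (k+1)` in the interlacing `y (k+1) ≤ z k ≤ y k`; both coefficients are
nonnegative once `G ≤ H` and `G` is antitone. -/
noncomputable def abelTerm (G H y z : ℕ → ℝ) (φ : ℝ → E) (k : ℕ) : E :=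
  (H k - G (k + 1)) • (φ (z k) - φ (y k)) + (H (k + 1) - G (k + 1)) • (φ (y (k + 1)) - φ (z k))

theorem sum_range_abelTerm (h0 : G 0 = H 0) (φ : ℝ → E) (n : ℕ) :
    ∑ k ∈ range n, abelTerm G H y z φ k =
      ∑ k ∈ range n, ((H k - H (k + 1)) • φ (z k) - (G k - G (k + 1)) • φ (y k)) +
        (H n - G n) • φ (y n) := by
  induction n with
  | zero => simp [h0]
  | succ n ih =>
    rw [sum_range_succ, ih, sum_range_succ, abelTerm]
    module

theorem norm_abelTerm_le (hG : Antitone G) (hGH : G ≤ H)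
    (hzy : ∀ k, z k ≤ y k) (hyz : ∀ k, y (k + 1) ≤ z k) (hy : ∀ k, y k ∈ D) (hz : ∀ k, z k ∈ D)
    {ψ : ℝ → E} {v : ℝ → ℝ} (hψv : ∀ a ∈ D, ∀ b ∈ D, a ≤ b → ‖ψ b - ψ a‖ ≤ v b - v a) (k : ℕ) :
    ‖abelTerm G H y z ψ k‖ ≤ -abelTerm G H y z v k := by
  have hα : 0 ≤ H k - G (k + 1) := sub_nonneg.2 ((hG k.le_succ).trans (hGH k))
  have hβ : 0 ≤ H (k + 1) - G (k + 1) := sub_nonneg.2 (hGH _)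
  calc ‖abelTerm G H y z ψ k‖
      ≤ (H k - G (k + 1)) * ‖ψ (z k) - ψ (y k)‖ +
          (H (k + 1) - G (k + 1)) * ‖ψ (y (k + 1)) - ψ (z k)‖ := by
        refine (norm_add_le _ _).trans_eq ?_
        rw [norm_smul, norm_smul, Real.norm_of_nonneg hα, Real.norm_of_nonneg hβ]
    _ ≤ (H k - G (k + 1)) * (v (y k) - v (z k)) +
          (H (k + 1) - G (k + 1)) * (v (z k) - v (y (k + 1))) := by
        gcongr
        · rw [norm_sub_rev]; exact hψv _ (hz k) _ (hy k) (hzy k)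
        · rw [norm_sub_rev]; exact hψv _ (hy (k + 1)) _ (hz k) (hyz k)
    _ = -abelTerm G H y z v k := by
        simp only [abelTerm, smul_eq_mul]
        ring

theorem tendsto_sum_abelTerm [CompleteSpace E] (hG : Antitone G) (hH : Antitone H)
    (h0 : G 0 = H 0) (hGlim : Tendsto G atTop (𝓝 0)) (hHlim : Tendsto H atTop (𝓝 0))
    (hy : ∀ k, y k ∈ D) (hz : ∀ k, z k ∈ D) {φ : ℝ → E} (hφ : ∀ a ∈ D, ‖φ a‖ ≤ C) :
    Tendsto (fun n => ∑ k ∈ range n, abelTerm G H y z φ k) atTop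
      (𝓝 (tailSum H z φ - tailSum G y φ)) := by
  have hboundary : Tendsto (fun n => (H n - G n) • φ (y n)) atTop (𝓝 0) := by
    refine squeeze_zero_norm (fun n => ?_) (by simpa using ((hHlim.sub hGlim).norm.mul_const C))
    rw [norm_smul]
    exact mul_le_mul_of_nonneg_left (hφ _ (hy n)) (norm_nonneg _)
  simp_rw [sum_range_abelTerm h0]
  simpa [tailSum] using (((summable_tailSum hH hHlim fun k => hφ _ (hz k)).hasSum.sub
    (summable_tailSum hG hGlim fun k => hφ _ (hy k)).hasSum).tendsto_sum_nat).add hboundary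

theorem norm_tailSum_sub_le [CompleteSpace E] (hG : Antitone G) (hH : Antitone H) (hGH : G ≤ H)
    (h0 : G 0 = H 0) (hGlim : Tendsto G atTop (𝓝 0)) (hHlim : Tendsto H atTop (𝓝 0))
    (hzy : ∀ k, z k ≤ y k) (hyz : ∀ k, y (k + 1) ≤ z k) (hy : ∀ k, y k ∈ D) (hz : ∀ k, z k ∈ D)
    {ψ : ℝ → E} {v : ℝ → ℝ} (hψv : ∀ a ∈ D, ∀ b ∈ D, a ≤ b → ‖ψ b - ψ a‖ ≤ v b - v a)
    (hψ : ∀ a ∈ D, ‖ψ a‖ ≤ C) (hv : ∀ a ∈ D, ‖v a‖ ≤ C) :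
    ‖tailSum H z ψ - tailSum G y ψ‖ ≤ tailSum G y v - tailSum H z v := by
  rw [← neg_sub (tailSum H z v)]
  refine le_of_tendsto_of_tendsto'
    (tendsto_sum_abelTerm hG hH h0 hGlim hHlim hy hz hψ).norm
    (tendsto_sum_abelTerm hG hH h0 hGlim hHlim hy hz hv).neg fun n => ?_
  calc ‖∑ k ∈ range n, abelTerm G H y z ψ k‖
      ≤ ∑ k ∈ range n, -abelTerm G H y z v k :=
        (norm_sum_le _ _).trans (sum_le_sum fun k _ =>
          norm_abelTerm_le hG hGH hzy hyz hy hz hψv k)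
    _ = -∑ k ∈ range n, abelTerm G H y z v k := sum_neg_distrib _

end TailSum

section Transfer

variable {E : Type*} [NormedAddCommGroup E] [NormedSpace ℝ E] {N k : ℕ} {u s t C : ℝ}

noncomputable def tailWeight (N : ℕ) (u : ℝ) (k : ℕ) : ℝ :=
  (u + N) / (u + ((N + k : ℕ) : ℝ))

noncomputable def node (N : ℕ) (u : ℝ) (k : ℕ) : ℝ :=
  N / (u + ((N + k : ℕ) : ℝ))

/-- `Uop N`, for functions with values in any real normed space. -/
noncomputable def transfer (N : ℕ) (φ : ℝ → E) (u : ℝ) : E :=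
  tailSum (tailWeight N u) (node N u) φ

theorem add_natCast_add_pos (hu : 0 < u + N) (k : ℕ) : 0 < u + ((N + k : ℕ) : ℝ) := by
  push_cast
  linarith [k.cast_nonneg (α := ℝ)]

theorem tailWeight_zero (hu : 0 < u + N) : tailWeight N u 0 = 1 := by
  simp [tailWeight, hu.ne']

theorem tailWeight_sub_succ (hu : 0 < u + N) (k : ℕ) :
    tailWeight N u k - tailWeight N u (k + 1) =
      (u + N) / ((u + ((N + k : ℕ) : ℝ)) * (u + ((N + k : ℕ) : ℝ) + 1)) := by
  have h := add_natCast_add_pos hu k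
  have hsucc : ((N + (k + 1) : ℕ) : ℝ) = ((N + k : ℕ) : ℝ) + 1 := by push_cast; ring
  rw [tailWeight, tailWeight, hsucc, ← add_assoc,
    div_sub_div _ _ h.ne' (by linarith)]
  congr 1
  ring

theorem antitone_tailWeight (hu : 0 < u + N) : Antitone (tailWeight N u) :=
  antitone_nat_of_succ_le fun k => sub_nonneg.1 <| by
    rw [tailWeight_sub_succ hu]
    have := add_natCast_add_pos hu k
    exact div_nonneg hu.le (by positivity)

theorem tailWeight_le_tailWeight (hs : 0 < s + N) (hst : s ≤ t) (k : ℕ) :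
    tailWeight N s k ≤ tailWeight N t k := by
  rw [tailWeight, tailWeight, div_le_div_iff₀ (add_natCast_add_pos hs k)
    (add_natCast_add_pos (by linarith) k)]
  push_cast
  nlinarith [mul_nonneg (k.cast_nonneg (α := ℝ)) (sub_nonneg.2 hst)]

theorem tendsto_tailWeight (N : ℕ) (u : ℝ) : Tendsto (tailWeight N u) atTop (𝓝 0) :=
  tendsto_const_nhds.div_atTop <| tendsto_atTop_add_const_left _ u <|
    tendsto_natCast_atTop_atTop.comp <| tendsto_atTop_mono (fun k => k.le_add_left N) tendsto_id

theorem tailWeight_zero_succ (N k : ℕ) :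
    tailWeight N 0 (k + 1) = N / (N + 1) * tailWeight N 1 k := by
  simp only [tailWeight]
  push_cast
  field_simp
  ring

theorem node_mem_Icc (hu : 0 ≤ u) : node N u k ∈ Icc 0 1 :=
  ⟨div_nonneg N.cast_nonneg (by positivity),
    div_le_one_of_le₀ (by push_cast; linarith [k.cast_nonneg (α := ℝ)]) (by positivity)⟩

theorem node_le_node (hs : 0 < s + N) (hst : s ≤ t) : node N t k ≤ node N s k :=
  div_le_div_of_nonneg_left N.cast_nonneg (add_natCast_add_pos hs k) (by linarith)

theorem node_succ_le (ht : 0 < t + N) (hts : t ≤ s + 1) : node N s (k + 1) ≤ node N t k :=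
  div_le_div_of_nonneg_left N.cast_nonneg (add_natCast_add_pos ht k) (by push_cast; linarith)

theorem node_zero_succ (N k : ℕ) : node N 0 (k + 1) = node N 1 k := by
  simp only [node]
  push_cast
  ring_nf

theorem node_zero_zero (hN : 0 < N) : node N 0 0 = 1 := by
  simp [node, hN.ne']

theorem Uop_eq_transfer (hN : 0 < N) (hu : 0 ≤ u) (f : ℝ → ℂ) : Uop N f u = transfer N f u := by
  have hu' : 0 < u + N := by positivity
  refine tsum_congr fun k => ?_
  rw [tailWeight_sub_succ hu', Complex.real_smul]
  rfl

theorem transfer_zero [CompleteSpace E] (hN : 0 < N) {φ : ℝ → E}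
    (hφ : ∀ a ∈ Icc (0 : ℝ) 1, ‖φ a‖ ≤ C) :
    transfer N φ 0 = ((N : ℝ) + 1)⁻¹ • φ 1 + ((N : ℝ) / (N + 1)) • transfer N φ 1 := by
  have h0 : 0 < (0 : ℝ) + N := by simpa using hN
  rw [transfer, tailSum, (summable_tailSum (antitone_tailWeight h0) (tendsto_tailWeight N 0)
    fun k => hφ _ (node_mem_Icc le_rfl)).tsum_eq_zero_add, transfer, tailSum, ← tsum_const_smul'']
  congr 1
  · rw [tailWeight_zero h0, tailWeight_zero_succ, tailWeight_zero (by positivity),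
      node_zero_zero hN]
    congr 1
    field_simp
    ring
  · refine tsum_congr fun k => ?_
    rw [tailWeight_zero_succ, tailWeight_zero_succ, node_zero_succ, smul_smul, mul_sub]

theorem norm_transfer_sub_le [CompleteSpace E] (hN : 0 < N) {ψ : ℝ → E} {v : ℝ → ℝ}
    (hψv : ∀ a ∈ Icc (0 : ℝ) 1, ∀ b ∈ Icc (0 : ℝ) 1, a ≤ b → ‖ψ b - ψ a‖ ≤ v b - v a)
    (hψ : ∀ a ∈ Icc (0 : ℝ) 1, ‖ψ a‖ ≤ C) (hv : ∀ a ∈ Icc (0 : ℝ) 1, ‖v a‖ ≤ C)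
    (hs : s ∈ Icc (0 : ℝ) 1) (ht : t ∈ Icc (0 : ℝ) 1) (hst : s ≤ t) :
    ‖transfer N ψ t - transfer N ψ s‖ ≤ transfer N v s - transfer N v t := by
  have hs' : 0 < s + N := by linarith [hs.1, (Nat.cast_pos (α := ℝ)).2 hN]
  have ht' : 0 < t + N := by linarith
  exact norm_tailSum_sub_le (antitone_tailWeight hs') (antitone_tailWeight ht')
    (tailWeight_le_tailWeight hs' hst) (by rw [tailWeight_zero hs', tailWeight_zero ht'])
    (tendsto_tailWeight N s) (tendsto_tailWeight N t) (fun _ => node_le_node hs' hst)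
    (fun _ => node_succ_le ht' (by linarith [ht.2, hs.1])) (fun _ => node_mem_Icc hs.1)
    (fun _ => node_mem_Icc ht.1) hψv hψ hv

theorem eVariationOn_transfer_le [CompleteSpace E] (hN : 0 < N) {ψ : ℝ → E} {v : ℝ → ℝ}
    (hψv : ∀ a ∈ Icc (0 : ℝ) 1, ∀ b ∈ Icc (0 : ℝ) 1, a ≤ b → ‖ψ b - ψ a‖ ≤ v b - v a)
    (hψ : ∀ a ∈ Icc (0 : ℝ) 1, ‖ψ a‖ ≤ C) (hv : ∀ a ∈ Icc (0 : ℝ) 1, ‖v a‖ ≤ C)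
    (hv0 : ∀ a ∈ Icc (0 : ℝ) 1, 0 ≤ v a) :
    eVariationOn (transfer N ψ) (Icc 0 1) ≤ ENNReal.ofReal (v 1 / (N + 1)) := by
  have hdist : ∀ s ∈ Icc (0 : ℝ) 1, ∀ t ∈ Icc (0 : ℝ) 1, s ≤ t →
      dist (transfer N ψ s) (transfer N ψ t) ≤ -transfer N v t - -transfer N v s :=
    fun s hs t ht hst => by
      rw [dist_comm, dist_eq_norm, neg_sub_neg]
      exact norm_transfer_sub_le hN hψv hψ hv hs ht hst
  have hv1 : 0 ≤ transfer N v 1 := tailSum_nonneg (antitone_tailWeight (by positivity))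
    fun _ => hv0 _ (node_mem_Icc zero_le_one)
  have hendpoints : -transfer N v 1 - -transfer N v 0 = (v 1 - transfer N v 1) / (N + 1) := by
    rw [transfer_zero hN hv, smul_eq_mul, smul_eq_mul]
    field_simp
    ring
  calc eVariationOn (transfer N ψ) (Icc 0 1)
      = eVariationOn (transfer N ψ) (Icc 0 1 ∩ Icc 0 1) := by rw [inter_self]
    _ ≤ ENNReal.ofReal (-transfer N v 1 - -transfer N v 0) :=
        eVariationOn_inter_Icc_le_of_dist_le_sub hdist (left_mem_Icc.2 zero_le_one)
          (right_mem_Icc.2 zero_le_one)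
    _ ≤ ENNReal.ofReal (v 1 / (N + 1)) := by
        rw [hendpoints]
        exact ENNReal.ofReal_le_ofReal (by gcongr; linarith)

end Transfer

/-- For every function `f : I → ℂ` of bounded variation,
`var(Uf) ≤ (1/(N+1)) var(f)`. -/
theorem var_Uop (N : ℕ) (hN : 1 ≤ N) (f : ℝ → ℂ)
    (hf : eVariationOn f (Icc (0:ℝ) 1) ≠ ⊤) :
    eVariationOn (Uop N f) (Icc (0:ℝ) 1) ≤
      ((N : ℝ≥0∞) + 1)⁻¹ * eVariationOn f (Icc (0:ℝ) 1) := by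
  set V := eVariationOn f (Icc (0:ℝ) 1)
  set v := variationOnFromTo f (Icc (0:ℝ) 1) 0
  have h0 : (0 : ℝ) ∈ Icc (0 : ℝ) 1 := left_mem_Icc.2 zero_le_one
  have hmajor : ∀ a ∈ Icc (0 : ℝ) 1, ∀ b ∈ Icc (0 : ℝ) 1, a ≤ b → ‖f b - f a‖ ≤ v b - v a :=
    fun a ha b hb hab => by
      rw [← dist_eq_norm, dist_comm]
      exact dist_le_variationOnFromTo_sub (BoundedVariationOn.locallyBoundedVariationOn hf)
        h0 ha hb hab
  have hf_bound : ∀ a ∈ Icc (0 : ℝ) 1, ‖f a‖ ≤ ‖f 0‖ + V.toReal := fun a ha =>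
    (norm_le_insert' (f a) (f 0)).trans
      (by grw [← dist_eq_norm, BoundedVariationOn.dist_le hf ha h0])
  have hv_bound : ∀ a ∈ Icc (0 : ℝ) 1, ‖v a‖ ≤ ‖f 0‖ + V.toReal := fun a _ =>
    (variationOnFromTo.abs_le_eVariationOn hf).trans (le_add_of_nonneg_left (norm_nonneg _))
  have hv1 : v 1 = V.toReal := by simp [v, V, variationOnFromTo.eq_of_le]
  rw [eVariationOn.eq_of_eqOn fun u hu => Uop_eq_transfer hN hu.1 f]
  refine (eVariationOn_transfer_le hN hmajor hf_bound hv_bound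
    fun a ha => variationOnFromTo.nonneg_of_le _ _ ha.1).trans_eq ?_
  rw [hv1, div_eq_inv_mul, ENNReal.ofReal_mul (by positivity), ENNReal.ofReal_toReal hf,
    ENNReal.ofReal_inv_of_pos (by positivity)]
  norm_cast
end
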